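/- For ordinals β ≤ α, if μ satisfies (μ⊆), (μPR) and (μCumtα), then μ satisfies (μCumtβ). -/

import Mathlib

/-! A sequence `(X_γ)_{γ ≤ b}` extends to a sequence indexed up to `a` by freezing it at `X_b`,
i.e. `γ ↦ X_{min γ b}`. The extension still satisfies the hypothesis of `(μCumt a)`, since every
`X_γ` with `γ < min β b` is again a term of index `< β`, and its last term is `X_b`. -/

section Cumt

variable {α ι : Type*} [LinearOrder ι]

/-- The condition `(μCumt a)`, for sequences indexed by an arbitrary linear order. -/
def SatisfiesCumt (𝒴 : Set (Set α)) (μ : Set α → Set α) (a : ι) : Prop :=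
  ∀ (U : Set α) (X : ι → Set α), U ∈ 𝒴 → (∀ γ ≤ a, X γ ∈ 𝒴) →
    (∀ β ≤ a, μ (X β) ⊆ U ∪ ⋃ γ < β, X γ) → X a ∩ μ U ⊆ μ (X a)

theorem biUnion_lt_min_subset_biUnion_lt_comp_min (X : ι → Set α) (β b : ι) :
    ⋃ γ < min β b, X γ ⊆ ⋃ γ < β, X (min γ b) := by
  refine Set.iUnion₂_subset fun γ hγ => ?_
  rw [lt_min_iff] at hγ
  rw [← min_eq_left hγ.2.le]
  exact Set.subset_biUnion_of_mem (u := fun γ => X (min γ b)) hγ.1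

theorem SatisfiesCumt.of_le {𝒴 : Set (Set α)} {μ : Set α → Set α} {a b : ι}
    (h : SatisfiesCumt 𝒴 μ a) (hba : b ≤ a) : SatisfiesCumt 𝒴 μ b := by
  intro U X hU hmem hcond
  have key := h U (fun γ => X (min γ b)) hU (fun γ _ => hmem _ (min_le_right γ b))
    fun β _ => (hcond _ (min_le_right β b)).trans <|
      Set.union_subset_union_right U (biUnion_lt_min_subset_biUnion_lt_comp_min X β b)
  simpa only [min_eq_right hba] using key

end Cumt

theorem stmt_13_general {α : Type*} (𝒴 : Set (Set α)) (μ : Set α → Set α)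
    (a b : Ordinal) (hba : b ≤ a)
    (hCumta : ∀ (U : Set α) (X : Ordinal → Set α), U ∈ 𝒴 → (∀ γ ≤ a, X γ ∈ 𝒴) →
      (∀ β ≤ a, μ (X β) ⊆ U ∪ ⋃ γ < β, X γ) →
      X a ∩ μ U ⊆ μ (X a)) :
    ∀ (U : Set α) (X : Ordinal → Set α), U ∈ 𝒴 → (∀ γ ≤ b, X γ ∈ 𝒴) →
      (∀ β ≤ b, μ (X β) ⊆ U ∪ ⋃ γ < β, X γ) →
      X b ∩ μ U ⊆ μ (X b) :=
  SatisfiesCumt.of_le hCumta hba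

/-- For ordinals b ≤ a, (μ⊆) + (μPR) + (μCumt a) imply (μCumt b). -/
theorem stmt_13 {α : Type*} (𝒴 : Set (Set α)) (μ : Set α → Set α)
    (a b : Ordinal) (hba : b ≤ a)
    (hSub : ∀ X ∈ 𝒴, μ X ⊆ X)
    (hPR : ∀ X ∈ 𝒴, ∀ Y ∈ 𝒴, X ⊆ Y → μ Y ∩ X ⊆ μ X)
    (hCumta : ∀ (U : Set α) (X : Ordinal → Set α), U ∈ 𝒴 → (∀ γ ≤ a, X γ ∈ 𝒴) →
      (∀ β ≤ a, μ (X β) ⊆ U ∪ ⋃ γ < β, X γ) →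
      X a ∩ μ U ⊆ μ (X a)) :
    ∀ (U : Set α) (X : Ordinal → Set α), U ∈ 𝒴 → (∀ γ ≤ b, X γ ∈ 𝒴) →
      (∀ β ≤ b, μ (X β) ⊆ U ∪ ⋃ γ < β, X γ) →
      X b ∩ μ U ⊆ μ (X b) :=
  stmt_13_general 𝒴 μ a b hba hCumta
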